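/- The closure operator on a V-category is idempotent: for any subset M of a V-category X, cl(cl(M)) = cl(M). -/

import Mathlib

/-- A (commutative, unital) quantale structure on a complete lattice `V`:
an associative commutative multiplication `⊗` with unit `k` such that
`u ⊗ -` preserves arbitrary suprema. -/
structure QuantaleStr (V : Type*) [CompleteLattice V] where
  mul : V → V → V
  k : V
  mul_comm : ∀ a b, mul a b = mul b a
  mul_assoc : ∀ a b c, mul (mul a b) c = mul a (mul b c)
  mul_unit : ∀ a, mul a k = a
  mul_sSup : ∀ (a : V) (S : Set V), mul a (sSup S) = ⨆ b ∈ S, mul a b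

variable {V : Type*} [CompleteLattice V]

/-- `a : X → X → V` is a `V`-category structure: `k ≤ a x x` and
`a x y ⊗ a y z ≤ a x z`. -/
def IsVCat (Q : QuantaleStr V) {X : Type*} (a : X → X → V) : Prop :=
  (∀ x, Q.k ≤ a x x) ∧ ∀ x y z, Q.mul (a x y) (a y z) ≤ a x z


/-- The closure of `M ⊆ X` in a `V`-category `(X,a)`:
`cl M = { x | k ≤ ⨆ y ∈ M, a x y ⊗ a y x }`. -/
def vcl (Q : QuantaleStr V) {X : Type*} (a : X → X → V) (M : Set X) : Set X :=
  { x | Q.k ≤ ⨆ y ∈ M, Q.mul (a x y) (a y x) }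

/-!
Write `s x y = a x y ⊗ a y x` for the symmetrised structure; then `cl M = {x | k ≤ ⨆ y ∈ M, s x y}`,
and `s` is again reflexive and transitive. Reflexivity gives `M ⊆ cl M`. For the converse,
if `y ∈ cl M` then `s x y = s x y ⊗ k ≤ ⨆ z ∈ M, s x y ⊗ s y z ≤ ⨆ z ∈ M, s x z`, because `⊗`
preserves suprema; hence `⨆ y ∈ cl M, s x y ≤ ⨆ z ∈ M, s x z`.
-/

namespace QuantaleStr

variable (Q : QuantaleStr V)

lemma mul_iSup {ι : Sort*} (u : V) (f : ι → V) :
    Q.mul u (⨆ i, f i) = ⨆ i, Q.mul u (f i) := by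
  rw [iSup, Q.mul_sSup, iSup_range]

lemma mul_iSup₂ {ι : Sort*} {κ : ι → Sort*} (u : V) (f : ∀ i, κ i → V) :
    Q.mul u (⨆ (i) (j), f i j) = ⨆ (i) (j), Q.mul u (f i j) := by
  simp only [Q.mul_iSup]

lemma monotone_mul_left (u : V) : Monotone (Q.mul u) := fun b c h =>
  calc Q.mul u b ≤ ⨆ t ∈ ({b, c} : Set V), Q.mul u t := le_biSup _ (Set.mem_insert b _)
    _ = Q.mul u c := by rw [← Q.mul_sSup, sSup_pair, sup_eq_right.2 h]

lemma mul_le_mul {p q r s : V} (hpr : p ≤ r) (hqs : q ≤ s) : Q.mul p q ≤ Q.mul r s :=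
  calc Q.mul p q ≤ Q.mul p s := Q.monotone_mul_left p hqs
    _ = Q.mul s p := Q.mul_comm _ _
    _ ≤ Q.mul s r := Q.monotone_mul_left s hpr
    _ = Q.mul r s := Q.mul_comm _ _

lemma mul_mul_mul_comm (p q r s : V) :
    Q.mul (Q.mul p q) (Q.mul r s) = Q.mul (Q.mul p r) (Q.mul q s) := by
  rw [Q.mul_assoc, ← Q.mul_assoc q, Q.mul_comm q r, Q.mul_assoc r, ← Q.mul_assoc]

end QuantaleStr

section VCat

variable (Q : QuantaleStr V) {X : Type*} (a : X → X → V)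

def vsym (x y : X) : V := Q.mul (a x y) (a y x)

variable {Q a}

lemma vcl_mono {M N : Set X} (h : M ⊆ N) : vcl Q a M ⊆ vcl Q a N :=
  fun _ hx => hx.trans (biSup_mono h)

lemma IsVCat.k_le_vsym_self (ha : IsVCat Q a) (x : X) : Q.k ≤ vsym Q a x x :=
  calc Q.k = Q.mul Q.k Q.k := (Q.mul_unit _).symm
    _ ≤ vsym Q a x x := Q.mul_le_mul (ha.1 x) (ha.1 x)

lemma IsVCat.vsym_trans (ha : IsVCat Q a) (x y z : X) :
    Q.mul (vsym Q a x y) (vsym Q a y z) ≤ vsym Q a x z := by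
  rw [vsym, vsym, Q.mul_mul_mul_comm, Q.mul_comm (a y x)]
  exact Q.mul_le_mul (ha.2 x y z) (ha.2 z y x)

lemma IsVCat.subset_vcl (ha : IsVCat Q a) (M : Set X) : M ⊆ vcl Q a M :=
  fun x hx => (ha.k_le_vsym_self x).trans (le_biSup (vsym Q a x) hx)

lemma IsVCat.vsym_le_of_mem_vcl (ha : IsVCat Q a) {M : Set X} {y : X} (hy : y ∈ vcl Q a M)
    (x : X) : vsym Q a x y ≤ ⨆ z ∈ M, vsym Q a x z :=
  calc vsym Q a x y = Q.mul (vsym Q a x y) Q.k := (Q.mul_unit _).symm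
    _ ≤ Q.mul (vsym Q a x y) (⨆ z ∈ M, vsym Q a y z) := Q.monotone_mul_left _ hy
    _ = ⨆ z ∈ M, Q.mul (vsym Q a x y) (vsym Q a y z) := Q.mul_iSup₂ _ _
    _ ≤ ⨆ z ∈ M, vsym Q a x z := iSup₂_mono fun z _ => ha.vsym_trans x y z

lemma IsVCat.vcl_vcl_subset (ha : IsVCat Q a) (M : Set X) : vcl Q a (vcl Q a M) ⊆ vcl Q a M :=
  fun x hx => hx.trans (iSup₂_le fun _ hy => ha.vsym_le_of_mem_vcl hy x)

end VCat

/-- The closure operator of a `V`-category is idempotent. -/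
theorem closure_idempotent (Q : QuantaleStr V) {X : Type*}
    (a : X → X → V) (ha : IsVCat Q a) (M : Set X) :
    vcl Q a (vcl Q a M) = vcl Q a M :=
  (ha.vcl_vcl_subset M).antisymm (vcl_mono (ha.subset_vcl M))
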